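/- arXiv:1210.6166 — 2 statements merged into one kernel-verified Lean document; each statement's English description precedes it below -/
import Mathlib

section
/- Let G be a directed graph. For any representation M : ↑↑ → D into a bicomplete category D, let ∼_M be the equivalence relation on the set G(1) of arcs defined by x ∼_M y iff φ₁^{M,G}(x) = φ₁^{M,G}(y), where φ^{M,G} is the interface transformation of G with respect to M. Then ∼_{M₀} is contained in ∼_M for every such M; that is, the partition of the arc set induced by the standard representation M₀ is the finest among all partitions induced by representations. -/
open CategoryTheory Limits Opposite WalkingParallelPair WalkingParallelPairHom

universe v w

section Machinery

variable {C : Type} [SmallCategory C] {D : Type w} [Category.{v} D]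

/-- The diagram `Elts(G) → C → D` whose colimit is `G ⊗ M`. -/
def elemDiagram (M : C ⥤ D) (G : Cᵒᵖ ⥤ Type) : G.Elementsᵒᵖ ⥤ D :=
  (CategoryOfElements.π G).leftOp ⋙ M

/-- `G ⊗ M`, the left Kan extension of `M` along Yoneda evaluated at `G`, computed as the
colimit of `M` over the category of elements of `G`. -/
noncomputable def tensorObj (M : C ⥤ D) (G : Cᵒᵖ ⥤ Type)
    [HasColimitsOfShape G.Elementsᵒᵖ D] : D :=
  colimit (elemDiagram M G)

/-- The colimit injection `μ^{M,G}_{(c,x)} : M(c) ⟶ G ⊗ M`. -/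
noncomputable def tensorι (M : C ⥤ D) (G : Cᵒᵖ ⥤ Type)
    [HasColimitsOfShape G.Elementsᵒᵖ D] (c : C) (x : G.obj (op c)) :
    M.obj c ⟶ tensorObj M G :=
  colimit.ι (elemDiagram M G) (op ⟨op c, x⟩)

/-- The diagram `Elts(y(c)) ≅ Over c → C → D` whose limit is the interface `Int_M(c)`. -/
def overDiagram (M : C ⥤ D) (c : C) : Over c ⥤ D :=
  Over.forget c ⋙ M

/-- The interface `Int_M(c)` of a representation `M` at `c`. -/
noncomputable def interfaceObj (M : C ⥤ D) [∀ c : C, HasLimitsOfShape (Over c) D] (c : C) : D :=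
  limit (overDiagram M c)

/-- The limit projection `ν^{M,c}_{(c',f)} : Int_M(c) ⟶ M(c')`. -/
noncomputable def interfaceπ (M : C ⥤ D) [∀ c : C, HasLimitsOfShape (Over c) D]
    {c' c : C} (f : c' ⟶ c) : interfaceObj M c ⟶ M.obj c' :=
  limit.π (overDiagram M c) (Over.mk f)

/-- The interface transformation `φ^{M,G}_c : G(c) → Hom_D(Int_M(c), G ⊗ M)`,
`x ↦ μ^{M,G}_{(c,x)} ∘ ν^{M,c}_{(c,id_c)}`. -/
noncomputable def interfaceTrans (M : C ⥤ D) (G : Cᵒᵖ ⥤ Type)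
    [HasColimitsOfShape G.Elementsᵒᵖ D] [∀ c : C, HasLimitsOfShape (Over c) D]
    (c : C) (x : G.obj (op c)) : interfaceObj M c ⟶ tensorObj M G :=
  interfaceπ M (𝟙 c) ≫ tensorι M G c x

end Machinery

section DirectedGraphs

/-- Arcs of a directed graph `G`, presented as a presheaf on the walking parallel pair. -/
abbrev arcs (G : WalkingParallelPairᵒᵖ ⥤ Type) : Type := G.obj (op one)

/-- Nodes of the directed graph `G`. -/
abbrev nodes (G : WalkingParallelPairᵒᵖ ⥤ Type) : Type := G.obj (op zero)

/-- The source map of `G`. -/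
abbrev srcMap (G : WalkingParallelPairᵒᵖ ⥤ Type) : arcs G → nodes G :=
  G.map (Quiver.Hom.op left)

/-- The target map of `G`. -/
abbrev tgtMap (G : WalkingParallelPairᵒᵖ ⥤ Type) : arcs G → nodes G :=
  G.map (Quiver.Hom.op right)

/-- The presheaf on `↑↑` (i.e. the directed graph) determined by source/target maps. -/
def dgPresheaf {A N : Type} (s t : A → N) : WalkingParallelPairᵒᵖ ⥤ Type :=
  walkingParallelPairOpEquiv.inverse ⋙ parallelPair (TypeCat.ofHom s) (TypeCat.ofHom t)

/-- A homomorphism of directed graphs, as a morphism of the associated presheaves. -/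
def dgHom {A N A' N' : Type} (s t : A → N) (s' t' : A' → N')
    (α : A → A') (ν : N → N') (hs : ∀ a, s' (α a) = ν (s a)) (ht : ∀ a, t' (α a) = ν (t a)) :
    dgPresheaf s t ⟶ dgPresheaf s' t' :=
  Functor.whiskerLeft walkingParallelPairOpEquiv.inverse
    (parallelPairHom (C := Type) (TypeCat.ofHom s) (TypeCat.ofHom t) (TypeCat.ofHom s')
      (TypeCat.ofHom t') (TypeCat.ofHom α) (TypeCat.ofHom ν)
      (by ext a; exact (hs a).symm) (by ext a; exact (ht a).symm))

end DirectedGraphs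

/-- The standard representation `M₀` of `↑↑`: `M₀(0)` is the single-arrow graph `p₀ → p₁`
(nodes `Bool`, `false = p₀`, `true = p₁`), `M₀(1)` is the path `q₀ → q₁ → q₂` (arcs `Bool`,
`false = b₀`, `true = b₁`; nodes `Fin 3`), with `M₀(m₀) : a ↦ b₀` (nodes `p₀ ↦ q₀, p₁ ↦ q₁`)
and `M₀(m₁) : a ↦ b₁` (nodes `p₀ ↦ q₁, p₁ ↦ q₂`). -/
def M0 : WalkingParallelPair ⥤ (WalkingParallelPairᵒᵖ ⥤ Type) :=
  parallelPair
    (dgHom (fun _ : PUnit => false) (fun _ => true)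
      (fun b : Bool => if b then (1 : Fin 3) else 0) (fun b => if b then 2 else 1)
      (fun _ => (0 : Fin 3)) (fun b : Bool => if b then 1 else 0)
      (fun _ => rfl) (fun _ => rfl))
    (dgHom (fun _ : PUnit => false) (fun _ => true)
      (fun b : Bool => if b then (1 : Fin 3) else 0) (fun b => if b then 2 else 1)
      (fun _ => (1 : Fin 3)) (fun b : Bool => if b then 2 else 1)
      (fun _ => rfl) (fun _ => rfl))

/-! For any representation `M`, restricting along either face map `0 ⟶ 1` factors `φ₁^{M,G}(x)`
through `μ^{M,G}` at the source or at the target of `x`, so `φ₁^{M,G}` is constant on the classes of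
the equivalence relation generated by "same source or same target". For `M₀` this relation is
recovered: `Int_{M₀}(1)` has a node sent to the middle node `q₁` of the path, and `φ₁^{M₀,G}(x)`
sends it to the midpoint of `x` in `G ⊗ M₀`; labelling the nodes of `G ⊗ M₀` by the components
of arcs they touch (a cocone on the node diagram) reads off the class of `x` from that point. -/

section Interface

variable {C : Type} [SmallCategory C] {D : Type w} [Category.{v} D]
  (M : C ⥤ D) (G : Cᵒᵖ ⥤ Type)
  [HasColimitsOfShape G.Elementsᵒᵖ D] [∀ c : C, HasLimitsOfShape (Over c) D]

/-- For a directed graph and `c = one`: two arcs with the same source or the same target. -/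
def SharesFace {c : C} (a b : G.obj (op c)) : Prop :=
  ∃ (c' : C) (f : c' ⟶ c), G.map f.op a = G.map f.op b

lemma interfaceTrans_eq_interfaceπ_comp_tensorι {c' c : C} (f : c' ⟶ c) (a : G.obj (op c)) :
    interfaceTrans M G c a = interfaceπ M f ≫ tensorι M G c' (G.map f.op a) := by
  have hπ : interfaceπ M (𝟙 c) = interfaceπ M f ≫ M.map f :=
    (limit.w (overDiagram M c) (Over.homMk f (by simp) : Over.mk f ⟶ Over.mk (𝟙 c))).symm
  have hι : M.map f ≫ tensorι M G c a = tensorι M G c' (G.map f.op a) :=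
    colimit.w (elemDiagram M G)
      (Quiver.Hom.op (⟨f.op, rfl⟩ : G.elementsMk (op c) a ⟶ G.elementsMk (op c') (G.map f.op a)))
  rw [interfaceTrans, hπ, Category.assoc, hι]

lemma interfaceTrans_eq_of_eqvGen {c : C} {a b : G.obj (op c)}
    (hab : Relation.EqvGen (SharesFace G) a b) :
    interfaceTrans M G c a = interfaceTrans M G c b :=
  congrArg (Quot.lift (interfaceTrans M G c) fun a b ⟨_, f, hf⟩ ↦ by
      rw [interfaceTrans_eq_interfaceπ_comp_tensorι M G f, hf,
        ← interfaceTrans_eq_interfaceπ_comp_tensorι])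
    (Quot.eqvGen_sound hab)

end Interface

section StandardRepresentation

/-- The node of `Int_{M₀}(1)`: the middle node `q₁` of the path, which is the image of `p₁` under
`M₀(m₀)` and of `p₀` under `M₀(m₁)`. -/
def interfaceNodeOver : ∀ {c : WalkingParallelPair}, (c ⟶ one) → (M0.obj c).obj (op zero)
  | _, left => true
  | _, right => false
  | _, .id _ => show Fin 3 from 1

lemma interfaceNodeOver_map {c c' : WalkingParallelPair} (g : c ⟶ one) (g' : c' ⟶ one)
    (f : c ⟶ c') (hf : f ≫ g' = g) :
    (M0.map f).app (op zero) (interfaceNodeOver g) = interfaceNodeOver g' := by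
  subst hf
  change WalkingParallelPairHom c c' at f
  cases f with
  | id => rw [show WalkingParallelPairHom.id c = 𝟙 c from rfl, M0.map_id]; rfl
  | left | right => change WalkingParallelPairHom one one at g'; cases g'; rfl

noncomputable def interfaceNode : (interfaceObj M0 one).obj (op zero) :=
  (limitObjIsoLimitCompEvaluation (overDiagram M0 one) (op zero)).inv <|
    Types.Limit.mk _ (fun j ↦ interfaceNodeOver j.hom)
      (fun j j' f ↦ interfaceNodeOver_map j.hom j'.hom f.left (Over.w f))

lemma interfaceπ_interfaceNode :
    (interfaceπ M0 (𝟙 one)).app (op zero) interfaceNode = (show Fin 3 from 1) :=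
  (ConcreteCategory.congr_hom (limitObjIsoLimitCompEvaluation_inv_π_app
    (overDiagram M0 one) (Over.mk (𝟙 one)) (op zero)) _).trans (Types.Limit.π_mk _ _ _ _)

variable (G : WalkingParallelPairᵒᵖ ⥤ Type)

def arcComponent (a : arcs G) : Set (arcs G) :=
  {b | Relation.EqvGen (SharesFace G) a b}

def outComponent (n : nodes G) : Set (arcs G) :=
  {b | ∃ a, srcMap G a = n ∧ Relation.EqvGen (SharesFace G) a b}

def inComponent (n : nodes G) : Set (arcs G) :=
  {b | ∃ a, tgtMap G a = n ∧ Relation.EqvGen (SharesFace G) a b}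

lemma outComponent_srcMap (a : arcs G) : outComponent G (srcMap G a) = arcComponent G a := by
  ext b
  refine ⟨fun ⟨a', ha', hb⟩ ↦ ?_, fun hb ↦ ⟨a, rfl, hb⟩⟩
  exact (Relation.EqvGen.rel _ _ ⟨zero, left, ha'.symm⟩).trans _ _ _ hb

lemma inComponent_tgtMap (a : arcs G) : inComponent G (tgtMap G a) = arcComponent G a := by
  ext b
  refine ⟨fun ⟨a', ha', hb⟩ ↦ ?_, fun hb ↦ ⟨a, rfl, hb⟩⟩
  exact (Relation.EqvGen.rel _ _ ⟨zero, right, ha'.symm⟩).trans _ _ _ hb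

/-- In `G ⊗ M₀` the midpoint `q₁(a)` of an arc `a` is glued to `p₁(src a)` and `p₀(tgt a)`, while
`q₀(a) ~ p₀(src a)` and `q₂(a) ~ p₁(tgt a)`; each node is sent to the component of arcs whose
midpoints it is glued to. -/
def nodeComponent :
    ∀ c : WalkingParallelPair, G.obj (op c) → (M0.obj c).obj (op zero) → Set (arcs G)
  | zero => fun n p => cond (show Bool from p) (outComponent G n) (inComponent G n)
  | one => fun a q => ![inComponent G (srcMap G a), arcComponent G a,
      outComponent G (tgtMap G a)] (show Fin 3 from q)

def nodeComponentCocone : Cocone (elemDiagram M0 G ⋙ (evaluation _ Type).obj (op zero)) :=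
  (elemDiagram M0 G ⋙ (evaluation _ Type).obj (op zero)).coconeTypesEquiv
    { pt := Set (arcs G)
      ι j := nodeComponent G j.unop.1.unop j.unop.2
      ι_naturality := by
        rintro ⟨⟨⟨c⟩, a⟩⟩ ⟨⟨⟨c'⟩, a'⟩⟩ ⟨⟨⟨ζ⟩, hζ⟩⟩
        change WalkingParallelPairHom c c' at ζ
        funext p
        cases ζ with
        | id =>
          obtain rfl : a' = a := (Functor.map_id_apply G _ a').symm.trans hζ
          exact congrArg (nodeComponent G c a')
            (Functor.map_id_apply (elemDiagram M0 G ⋙ (evaluation _ Type).obj (op zero)) _ p)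
        | left =>
          obtain rfl : srcMap G a' = a := hζ
          cases p
          · rfl
          · exact (outComponent_srcMap G a').symm
        | right =>
          obtain rfl : tgtMap G a' = a := hζ
          cases p
          · exact (inComponent_tgtMap G a').symm
          · rfl }

noncomputable def tensorNodeComponent : (tensorObj M0 G).obj (op zero) ⟶ Set (arcs G) :=
  (isColimitOfPreserves ((evaluation _ Type).obj (op zero))
    (colimit.isColimit (elemDiagram M0 G))).desc (nodeComponentCocone G)

lemma tensorNodeComponent_tensorι (c : WalkingParallelPair) (a : G.obj (op c))
    (p : (M0.obj c).obj (op zero)) :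
    tensorNodeComponent G ((tensorι M0 G c a).app (op zero) p) = nodeComponent G c a p :=
  ConcreteCategory.congr_hom ((isColimitOfPreserves ((evaluation _ Type).obj (op zero))
    (colimit.isColimit (elemDiagram M0 G))).fac (nodeComponentCocone G) (op ⟨op c, a⟩)) p

lemma eqvGen_sharesFace_of_interfaceTrans_eq {x y : arcs G}
    (h : interfaceTrans M0 G one x = interfaceTrans M0 G one y) :
    Relation.EqvGen (SharesFace G) x y := by
  have hcomp : arcComponent G x = arcComponent G y := by
    have := congrArg (fun φ ↦ tensorNodeComponent G (φ.app (op zero) interfaceNode)) h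
    simp only [interfaceTrans, NatTrans.comp_app, types_comp_apply, interfaceπ_interfaceNode]
      at this
    exact (tensorNodeComponent_tensorι G one x _).symm.trans
      (this.trans (tensorNodeComponent_tensorι G one y _))
  exact (hcomp ▸ Relation.EqvGen.refl y : y ∈ arcComponent G x)

end StandardRepresentation

/-- For a directed graph `G` and any representation `M : ↑↑ ⥤ D` into a
bicomplete category `D`, the equivalence relation on arcs induced by the fibers of the
interface transformation `φ₁^{M₀,G}` for the standard representation `M₀` refines the one
induced by `φ₁^{M,G}`: `∼_{M₀} ⊆ ∼_M`. -/
theorem statement8 (G : WalkingParallelPairᵒᵖ ⥤ Type)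
    {D : Type w} [Category.{v} D] [HasLimits D] [HasColimits D]
    (M : WalkingParallelPair ⥤ D) (x y : arcs G)
    (h : interfaceTrans M0 G one x = interfaceTrans M0 G one y) :
    interfaceTrans M G one x = interfaceTrans M G one y :=
  interfaceTrans_eq_of_eqvGen M G (eqvGen_sharesFace_of_interfaceTrans_eq G h)
end

section
/- Let D be a bicomplete category and M : ↑↑ → D a representation satisfying the gluing condition (the pullback defining Int_M(1) is also a pushout). If a directed graph G is stable with respect to M (i.e., the unit η^{M,G} : G → Hom_D(M(−), G ⊗ M) is an isomorphism), then G is stable with respect to the standard representation M₀; equivalently, G satisfies: (i) there are no parallel arcs (f, g arcs with same source and same target implies f = g), and (ii) whenever arcs f, g, h satisfy ∂₁(g) = ∂₁(f) and ∂₀(g) = ∂₀(h), there exists an arc k with ∂₀(k) = ∂₀(f) and ∂₁(k) = ∂₁(h). -/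
open CategoryTheory Limits Opposite WalkingParallelPair WalkingParallelPairHom

universe v w

/-- The gluing condition for a representation `M : ↑↑ ⥤ D`: the pullback square defining
`Int_M(1)` (the pullback of `M(m₀), M(m₁) : M(0) → M(1)`) is also a pushout square. -/
def GluingCondition {D : Type w} [Category.{v} D] (M : WalkingParallelPair ⥤ D) : Prop :=
  ∃ (P : D) (a b : P ⟶ M.obj zero) (w : a ≫ M.map left = b ≫ M.map right),
    Nonempty (IsLimit (PullbackCone.mk a b w)) ∧
    Nonempty (IsColimit (PushoutCocone.mk (M.map left) (M.map right) w))

/-- A directed graph `G` is stable with respect to a representation `M : ↑↑ ⥤ D` if the unit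
`η^{M,G} : G ⟶ Hom_D(M(−), G ⊗ M)` of the adjunction `(−) ⊗ M ⊣ Hom_D(M(−), −)` is an
isomorphism, i.e. each component `x ↦ μ^{M,G}_{(c,x)}` is a bijection. -/
def IsStable {D : Type w} [Category.{v} D] [HasLimits D] [HasColimits D]
    (M : WalkingParallelPair ⥤ D) (G : WalkingParallelPairᵒᵖ ⥤ Type) : Prop :=
  ∀ c : WalkingParallelPair,
    Function.Bijective (fun x : G.obj (op c) => tensorι M G c x)

lemma tensorι_w {D : Type w} [Category.{v} D] [HasColimits D]
    (M : WalkingParallelPair ⥤ D) (G : WalkingParallelPairᵒᵖ ⥤ Type)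
    {c c' : WalkingParallelPair} (m : c ⟶ c') (x : G.obj (op c')) :
    M.map m ≫ tensorι M G c' x = tensorι M G c (G.map m.op x) := by
  let A : G.Elements := ⟨op c', x⟩
  let B : G.Elements := ⟨op c, G.map m.op x⟩
  let e : A ⟶ B := ⟨m.op, rfl⟩
  exact colimit.w (elemDiagram M G) e.op

/-- Let `M : ↑↑ ⥤ D` be a representation into a bicomplete category
satisfying the gluing condition. If a directed graph `G` is stable with respect to `M`, then
`G` is stable with respect to the standard representation `M₀`; equivalently: (i) `G` has no
parallel arcs, and (ii) whenever arcs `f, g, h` satisfy `∂₁(g) = ∂₁(f)` and `∂₀(g) = ∂₀(h)`,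
there is an arc `k` with `∂₀(k) = ∂₀(f)` and `∂₁(k) = ∂₁(h)`. -/
theorem statement15 {D : Type w} [Category.{v} D] [HasLimits D] [HasColimits D]
    (M : WalkingParallelPair ⥤ D) (hglue : GluingCondition M)
    (G : WalkingParallelPairᵒᵖ ⥤ Type) (hstable : IsStable M G) :
    (∀ f g : arcs G, srcMap G f = srcMap G g → tgtMap G f = tgtMap G g → f = g) ∧
    (∀ f g h : arcs G, tgtMap G g = tgtMap G f → srcMap G g = srcMap G h →
      ∃ k : arcs G, srcMap G k = srcMap G f ∧ tgtMap G k = tgtMap G h) := by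
  obtain ⟨P, a, b, w, -, ⟨hpo⟩⟩ := hglue
  have hsrc : ∀ x : arcs G,
      M.map left ≫ tensorι M G one x = tensorι M G zero (srcMap G x) :=
    fun x => tensorι_w M G left x
  have htgt : ∀ x : arcs G,
      M.map right ≫ tensorι M G one x = tensorι M G zero (tgtMap G x) :=
    fun x => tensorι_w M G right x
  constructor
  · intro f g hs ht
    apply (hstable one).1
    apply PushoutCocone.IsColimit.hom_ext hpo
    · exact (hsrc f).trans ((congrArg (tensorι M G zero) hs).trans (hsrc g).symm)
    · exact (htgt f).trans ((congrArg (tensorι M G zero) ht).trans (htgt g).symm)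
  · intro f g h hgf hgh
    have hw : a ≫ tensorι M G zero (srcMap G f) = b ≫ tensorι M G zero (tgtMap G h) := by
      calc a ≫ tensorι M G zero (srcMap G f)
          = a ≫ M.map left ≫ tensorι M G one f := by rw [hsrc]
        _ = b ≫ M.map right ≫ tensorι M G one f := by rw [← Category.assoc, ← Category.assoc, w]
        _ = b ≫ tensorι M G zero (tgtMap G g) := by rw [htgt, hgf]
        _ = b ≫ M.map right ≫ tensorι M G one g := by rw [htgt]
        _ = a ≫ M.map left ≫ tensorι M G one g := by rw [← Category.assoc, ← Category.assoc, w]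
        _ = a ≫ tensorι M G zero (srcMap G h) := by rw [hsrc, hgh]
        _ = a ≫ M.map left ≫ tensorι M G one h := by rw [hsrc]
        _ = b ≫ M.map right ≫ tensorι M G one h := by rw [← Category.assoc, ← Category.assoc, w]
        _ = b ≫ tensorι M G zero (tgtMap G h) := by rw [htgt]
    let u : M.obj one ⟶ tensorObj M G :=
      PushoutCocone.IsColimit.desc hpo (tensorι M G zero (srcMap G f))
        (tensorι M G zero (tgtMap G h)) hw
    obtain ⟨k, hk'⟩ := (hstable one).2 u
    have hk : tensorι M G one k = u := hk'
    refine ⟨k, (hstable zero).1 ?_, (hstable zero).1 ?_⟩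
    · show tensorι M G zero (srcMap G k) = tensorι M G zero (srcMap G f)
      rw [← hsrc]
      show M.map left ≫ tensorι M G one k = _
      rw [hk]
      exact PushoutCocone.IsColimit.inl_desc hpo _ _ _
    · show tensorι M G zero (tgtMap G k) = tensorι M G zero (tgtMap G h)
      rw [← htgt]
      show M.map right ≫ tensorι M G one k = _
      rw [hk]
      exact PushoutCocone.IsColimit.inr_desc hpo _ _ _
end
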